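/- Let n ≥ 1, R > 0, C₀ > 0, and let g : {x ∈ ℝⁿ : |x| ≥ R} → ℝ≥0 be a smooth function of polynomial growth (g(x) = O(|x|^N) for some N) satisfying −Δg ≤ −C₀ g, i.e. Δg ≥ C₀ g, where Δ is the (geometer's negative of the) standard Laplacian so that the hypothesis reads (−Σ ∂²_{x_i}) g ≤ −C₀ g. Then there exists ε₁ > 0, depending only on C₀ (and n), such that g(x) = O(exp(−ε₁ |x|)) as |x| → ∞. -/

import Mathlib

/-!
Comparison with explicit solutions of `Δu = ε²u`, `ε = √C₀` (here `Δ = ∑ ∂²`, so the hypothesis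
says that `g` is a subsolution). For a vector `v` of length `ε` the plane wave
`φ = M e^{εR} e^{⟪v, ·⟫}` dominates `g` on the sphere `‖y‖ = R`, and for every `η > 0` the barrier
`η ∑ᵢ cosh ⟪ε eᵢ, ·⟫` (`eᵢ` an orthonormal basis) grows exponentially in every direction, so it dominates the polynomially
bounded `g` on a large sphere `‖y‖ = S`. By the maximum principle for `Δ - ε²` on the annulus
`R ≤ ‖y‖ ≤ S`, `g ≤ φ + η ∑ᵢ cosh ⟪ε eᵢ, ·⟫` there; letting `S → ∞` and `η → 0` gives `g ≤ φ`.
Choosing `v = -ε x / ‖x‖` yields `g x ≤ M e^{εR} e^{-ε‖x‖}`.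
-/

open Real Filter Topology Set InnerProductSpace Laplacian Module
open scoped RealInnerProductSpace

theorem IsLocalMax.deriv_deriv_nonpos {f : ℝ → ℝ} {a : ℝ} (h : IsLocalMax f a)
    (hf : ContinuousAt f a) : deriv (deriv f) a ≤ 0 := by
  by_contra! hpos
  -- `f'' a > 0` makes `a` a local minimum too, so `f` is locally constant and `f'' a = 0`
  have hmin : IsLocalMin f a := isLocalMin_of_deriv_deriv_pos hpos h.deriv_eq_zero hf
  have hconst : f =ᶠ[𝓝 a] fun _ => f a :=
    (hmin.and h).mono fun _ hy => le_antisymm hy.2 hy.1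
  simp [hconst.deriv.deriv_eq] at hpos

theorem IsLocalMax.iteratedFDeriv_two_nonpos {E : Type*} [NormedAddCommGroup E]
    [NormedSpace ℝ E] {u : E → ℝ} (hu : ContDiff ℝ 2 u) {x : E} (h : IsLocalMax u x) (a : E) :
    iteratedFDeriv ℝ 2 u x ![a, a] ≤ 0 := by
  set ℓ := ContinuousLinearMap.toSpanSingleton ℝ a
  set v : E → ℝ := fun z => u (x + z)
  have hv : ContDiff ℝ 2 v := hu.comp (contDiff_const.add contDiff_id)
  have hline : IsLocalMax (v ∘ ℓ) 0 :=
    ((by rwa [map_zero, add_zero] : IsLocalMax u (x + ℓ 0)).comp_continuous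
      (continuous_const_add x).continuousAt).comp_continuous ℓ.continuous.continuousAt
  have h2 : deriv (deriv (v ∘ ℓ)) 0 = iteratedFDeriv ℝ 2 u x ![a, a] := by
    rw [← iteratedDeriv_one (f := v ∘ ℓ), ← iteratedDeriv_succ, iteratedDeriv_eq_iteratedFDeriv,
      ℓ.iteratedFDeriv_comp_right hv _ le_rfl, iteratedFDeriv_comp_add_left]
    simp only [ℓ, ContinuousMultilinearMap.compContinuousLinearMap_apply,
      ContinuousLinearMap.toSpanSingleton_apply, one_smul, map_zero, add_zero]
    congr 1
    ext i
    fin_cases i <;> rfl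
  exact h2 ▸ hline.deriv_deriv_nonpos (hv.continuous.comp ℓ.continuous).continuousAt

theorem isCompact_norm_preimage_Icc {E : Type*} [SeminormedAddCommGroup E] [ProperSpace E]
    (R S : ℝ) : IsCompact (norm ⁻¹' Icc R S : Set E) :=
  (isCompact_closedBall 0 S).of_isClosed_subset (isClosed_Icc.preimage continuous_norm)
    fun _ hy => mem_closedBall_zero_iff.2 hy.2

variable {E : Type*} [NormedAddCommGroup E] [InnerProductSpace ℝ E] [FiniteDimensional ℝ E]

theorem IsLocalMax.laplacian_nonpos {u : E → ℝ} (hu : ContDiff ℝ 2 u) {x : E}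
    (h : IsLocalMax u x) : Δ u x ≤ 0 := by
  rw [laplacian_eq_iteratedFDeriv_stdOrthonormalBasis]
  exact Finset.sum_nonpos fun i _ => h.iteratedFDeriv_two_nonpos hu _

theorem IsCompact.nonpos_of_mul_le_laplacian {K : Set E} (hK : IsCompact K) {w : E → ℝ}
    (hw : ContDiff ℝ 2 w) {c : ℝ} (hc : 0 < c) (hΔ : ∀ y ∈ interior K, c * w y ≤ Δ w y)
    (hfr : ∀ y ∈ frontier K, w y ≤ 0) {y : E} (hy : y ∈ K) : w y ≤ 0 := by
  obtain ⟨z, hzK, hmax⟩ := hK.exists_isMaxOn ⟨y, hy⟩ hw.continuous.continuousOn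
  refine (hmax hy).trans ?_
  by_cases hz : z ∈ interior K
  · have hloc := hmax.isLocalMax (mem_interior_iff_mem_nhds.1 hz)
    exact nonpos_of_mul_nonpos_right ((hΔ z hz).trans (hloc.laplacian_nonpos hw)) hc
  · exact hfr z ⟨subset_closure hzK, hz⟩

theorem IsCompact.le_of_mul_le_laplacian {K : Set E} (hK : IsCompact K) {g B : E → ℝ}
    (hg : ContDiff ℝ 2 g) (hB : ContDiff ℝ 2 B) {c : ℝ} (hc : 0 < c)
    (hgΔ : ∀ y ∈ interior K, c * g y ≤ Δ g y) (hBΔ : ∀ y ∈ interior K, Δ B y ≤ c * B y)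
    (hfr : ∀ y ∈ frontier K, g y ≤ B y) {y : E} (hy : y ∈ K) : g y ≤ B y := by
  have hΔ : ∀ y ∈ interior K, c * (g - B) y ≤ Δ (g - B) y := fun y hy => by
    rw [hg.contDiffAt.laplacian_sub hB.contDiffAt, Pi.sub_apply, mul_sub]
    linarith [hgΔ y hy, hBΔ y hy]
  exact sub_nonpos.1 (hK.nonpos_of_mul_le_laplacian (hg.sub hB) hc hΔ
    (fun y hy => sub_nonpos.2 (hfr y hy)) hy)

theorem laplacian_fun_sum {F ι : Type*} [NormedAddCommGroup F] [NormedSpace ℝ F] (s : Finset ι)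
    {f : ι → E → F} {x : E} (hf : ∀ i ∈ s, ContDiffAt ℝ 2 (f i) x) :
    Δ (fun y => ∑ i ∈ s, f i y) x = ∑ i ∈ s, Δ (f i) x := by
  simp only [laplacian_eq_iteratedFDeriv_stdOrthonormalBasis, iteratedFDeriv_fun_sum_apply hf,
    sum_apply]
  exact Finset.sum_comm

theorem laplacian_comp_inner {f : ℝ → ℝ} (hf : ContDiff ℝ 2 f) (v x : E) :
    Δ (fun y => f ⟪v, y⟫) x = ‖v‖ ^ 2 * deriv (deriv f) ⟪v, x⟫ := by
  have h : ∀ a : E, iteratedFDeriv ℝ 2 (fun y => f ⟪v, y⟫) x ![a, a]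
      = ⟪v, a⟫ ^ 2 * deriv (deriv f) ⟪v, x⟫ := fun a => by
    rw [show (fun y => f ⟪v, y⟫) = f ∘ innerSL ℝ v from rfl,
      (innerSL ℝ v).iteratedFDeriv_comp_right hf x le_rfl,
      ContinuousMultilinearMap.compContinuousLinearMap_apply,
      iteratedFDeriv_apply_eq_iteratedDeriv_mul_prod, iteratedDeriv_succ, iteratedDeriv_one]
    simp [Fin.prod_univ_two, sq]
  simp only [laplacian_eq_iteratedFDeriv_stdOrthonormalBasis, h, ← Finset.sum_mul,
    OrthonormalBasis.sum_sq_inner_left]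

theorem laplacian_exp_inner (v x : E) :
    Δ (fun y => exp ⟪v, y⟫) x = ‖v‖ ^ 2 * exp ⟪v, x⟫ := by
  simp [laplacian_comp_inner contDiff_exp]

theorem laplacian_cosh_inner (v x : E) :
    Δ (fun y => cosh ⟪v, y⟫) x = ‖v‖ ^ 2 * cosh ⟪v, x⟫ := by
  simp [laplacian_comp_inner contDiff_cosh]

variable (E) in
noncomputable def coshBarrier (ε : ℝ) (y : E) : ℝ :=
  ∑ i, cosh ⟪ε • stdOrthonormalBasis ℝ E i, y⟫

theorem contDiff_coshBarrier (ε : ℝ) : ContDiff ℝ 2 (coshBarrier E ε) :=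
  ContDiff.sum fun _ _ => contDiff_cosh.comp (innerSL ℝ _).contDiff

theorem laplacian_coshBarrier (ε : ℝ) (x : E) :
    Δ (coshBarrier E ε) x = ε ^ 2 * coshBarrier E ε x := by
  unfold coshBarrier
  rw [laplacian_fun_sum (f := fun i y => cosh ⟪ε • stdOrthonormalBasis ℝ E i, y⟫) _
    fun i _ => (contDiff_cosh.comp (innerSL ℝ _).contDiff).contDiffAt, Finset.mul_sum]
  refine Finset.sum_congr rfl fun i _ => ?_
  rw [laplacian_cosh_inner, norm_smul, (stdOrthonormalBasis ℝ E).orthonormal.1 i, mul_one,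
    norm_eq_abs, sq_abs]

theorem coshBarrier_pos [Nontrivial E] (ε : ℝ) (y : E) : 0 < coshBarrier E ε y :=
  have : Nonempty (Fin (finrank ℝ E)) := Fin.pos_iff_nonempty.1 finrank_pos
  Finset.sum_pos (fun _ _ => cosh_pos _) Finset.univ_nonempty

theorem exp_le_two_mul_coshBarrier [Nontrivial E] {ε : ℝ} (hε : 0 ≤ ε) (y : E) :
    exp (ε / √(finrank ℝ E) * ‖y‖) ≤ 2 * coshBarrier E ε y := by
  set b := stdOrthonormalBasis ℝ E
  have : Nonempty (Fin (finrank ℝ E)) := Fin.pos_iff_nonempty.1 finrank_pos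
  obtain ⟨i, hi⟩ := exists_eq_ciSup_of_finite (f := fun i => ‖⟪b i, y⟫‖)
  have hd : 0 < √(finrank ℝ E) := sqrt_pos.2 (by exact_mod_cast finrank_pos)
  have hy : ‖y‖ ≤ √(finrank ℝ E) * |⟪b i, y⟫| := by
    have := b.norm_le_card_mul_iSup_norm_inner y
    rwa [← hi, norm_eq_abs, Fintype.card_fin] at this
  calc exp (ε / √(finrank ℝ E) * ‖y‖) ≤ exp |⟪ε • b i, y⟫| := by
        rw [exp_le_exp, real_inner_smul_left, abs_mul, abs_of_nonneg hε, div_mul_eq_mul_div,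
          div_le_iff₀ hd]
        exact (mul_le_mul_of_nonneg_left hy hε).trans_eq (by ring)
    _ ≤ 2 * cosh ⟪ε • b i, y⟫ := by rw [cosh_eq]; linarith [exp_abs_le ⟪ε • b i, y⟫]
    _ ≤ 2 * coshBarrier E ε y := by
        gcongr
        exact Finset.single_le_sum (f := fun j => cosh ⟪ε • b j, y⟫) (fun j _ => (cosh_pos _).le)
          (Finset.mem_univ i)

theorem eventually_mul_pow_le_coshBarrier [Nontrivial E] {ε : ℝ} (hε : 0 < ε) (C : ℝ) (N : ℕ)
    {η : ℝ} (hη : 0 < η) :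
    ∀ᶠ S in atTop, ∀ y : E, ‖y‖ = S → C * S ^ N ≤ η * coshBarrier E ε y := by
  have hc : 0 < ε / √(finrank ℝ E) := div_pos hε (sqrt_pos.2 (by exact_mod_cast finrank_pos))
  filter_upwards [((isLittleO_pow_exp_pos_mul_atTop N hc).const_mul_left C).bound
    (half_pos hη)] with S hS y hy
  calc C * S ^ N ≤ η / 2 * exp (ε / √(finrank ℝ E) * S) := by
        simpa [abs_of_pos (exp_pos _)] using (le_abs_self _).trans hS
    _ ≤ η * coshBarrier E ε y := by
        rw [← hy]
        linarith [mul_le_mul_of_nonneg_left (exp_le_two_mul_coshBarrier hε.le y) (half_pos hη).le]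

theorem le_mul_exp_inner_add_mul_coshBarrier [Nontrivial E] {g : E → ℝ} (hg : ContDiff ℝ 2 g)
    {R ε M C : ℝ} {N : ℕ} (hε : 0 < ε) (hM : 0 ≤ M) (hsphere : ∀ y, ‖y‖ = R → g y ≤ M)
    (hpoly : ∀ y, R ≤ ‖y‖ → g y ≤ C * ‖y‖ ^ N) (hΔ : ∀ y, R ≤ ‖y‖ → ε ^ 2 * g y ≤ Δ g y)
    {v : E} (hv : ‖v‖ = ε) {η : ℝ} (hη : 0 < η) {x : E} (hx : R ≤ ‖x‖) :
    g x ≤ M * exp (ε * R) * exp ⟪v, x⟫ + η * coshBarrier E ε x := by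
  set φ : E → ℝ := (M * exp (ε * R)) • fun y => exp ⟪v, y⟫
  have hexp : ContDiff ℝ 2 fun y => exp ⟪v, y⟫ := contDiff_exp.comp (innerSL ℝ v).contDiff
  have hφ : ContDiff ℝ 2 φ := hexp.const_smul (M * exp (ε * R))
  have hηψ : ContDiff ℝ 2 (η • coshBarrier E ε) := (contDiff_coshBarrier ε).const_smul η
  have hφ_nonneg (y : E) : 0 ≤ φ y := by simp only [φ, Pi.smul_apply]; positivity
  have hφ_sphere (y : E) (hy : ‖y‖ = R) : M ≤ φ y := by
    have : -(ε * R) ≤ ⟪v, y⟫ := by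
      simpa [← hv, ← hy] using neg_le_of_abs_le (abs_real_inner_le_norm v y)
    simp only [φ, Pi.smul_apply, smul_eq_mul, mul_assoc, ← exp_add]
    exact le_mul_of_one_le_right hM (one_le_exp (by linarith))
  obtain ⟨S, hS, hxS⟩ :=
    ((eventually_mul_pow_le_coshBarrier (E := E) hε C N hη).and (eventually_ge_atTop ‖x‖)).exists
  refine (isCompact_norm_preimage_Icc R S).le_of_mul_le_laplacian (B := φ + η • coshBarrier E ε)
    hg (hφ.add hηψ) (pow_pos hε 2) (fun y hy => hΔ y (interior_subset hy).1) (fun y _ => ?_)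
    (fun y hy => ?_) ⟨hx, hxS⟩
  · rw [hφ.contDiffAt.laplacian_add hηψ.contDiffAt, laplacian_smul _ hexp.contDiffAt,
      laplacian_smul _ (contDiff_coshBarrier ε).contDiffAt, laplacian_exp_inner,
      laplacian_coshBarrier, hv]
    simp only [φ, Pi.add_apply, Pi.smul_apply, smul_eq_mul]
    linarith
  · have hψ := (coshBarrier_pos ε y).le
    simp only [Pi.add_apply, Pi.smul_apply, smul_eq_mul]
    rcases frontier_Icc (hx.trans hxS) ▸ continuous_norm.frontier_preimage_subset _ hy with
      hyR | hyS
    · nlinarith [hsphere y hyR, hφ_sphere y hyR]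
    · have hyS : ‖y‖ = S := hyS
      have hgy := hpoly y (hyS ▸ hx.trans hxS)
      rw [hyS] at hgy
      linarith [hS y hyS, hφ_nonneg y]

theorem le_mul_exp_inner_of_mul_le_laplacian [Nontrivial E] {g : E → ℝ} (hg : ContDiff ℝ 2 g)
    {R ε M C : ℝ} {N : ℕ} (hε : 0 < ε) (hM : 0 ≤ M) (hsphere : ∀ y, ‖y‖ = R → g y ≤ M)
    (hpoly : ∀ y, R ≤ ‖y‖ → g y ≤ C * ‖y‖ ^ N) (hΔ : ∀ y, R ≤ ‖y‖ → ε ^ 2 * g y ≤ Δ g y)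
    {v : E} (hv : ‖v‖ = ε) {x : E} (hx : R ≤ ‖x‖) :
    g x ≤ M * exp (ε * R) * exp ⟪v, x⟫ := by
  refine le_of_forall_pos_le_add fun δ hδ => ?_
  have hψ := coshBarrier_pos ε x
  simpa [div_mul_cancel₀ δ hψ.ne'] using le_mul_exp_inner_add_mul_coshBarrier hg hε hM hsphere
    hpoly hΔ hv (div_pos hδ hψ) hx

theorem ahlfors_type_decay_general (n : ℕ) (R C₀ : ℝ) (hR : 0 < R) (hC₀ : 0 < C₀)
    (g : EuclideanSpace ℝ (Fin n) → ℝ) (hg : ContDiff ℝ 2 g)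
    (hpoly : ∃ (N : ℕ) (C : ℝ), ∀ x, R ≤ ‖x‖ → g x ≤ C * ‖x‖ ^ N)
    (hsub : ∀ x, R ≤ ‖x‖ →
      -(∑ i, iteratedFDeriv ℝ 2 g x
          ![EuclideanSpace.single i 1, EuclideanSpace.single i 1]) ≤ -C₀ * g x) :
    ∃ ε₁ > (0:ℝ), ∃ C : ℝ, ∀ x, R ≤ ‖x‖ → g x ≤ C * Real.exp (-ε₁ * ‖x‖) := by
  obtain ⟨N, C, hpoly⟩ := hpoly
  obtain ⟨M, hM⟩ := (isCompact_sphere (0 : EuclideanSpace ℝ (Fin n)) R).bddAbove_image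
    hg.continuous.continuousOn
  have hΔ (x) (hx : R ≤ ‖x‖) : √C₀ ^ 2 * g x ≤ Δ g x := by
    rw [sq_sqrt hC₀.le,
      laplacian_eq_iteratedFDeriv_orthonormalBasis g (EuclideanSpace.basisFun (Fin n) ℝ)]
    simpa using hsub x hx
  have hε : 0 < √C₀ := sqrt_pos.2 hC₀
  refine ⟨√C₀, hε, max M 0 * exp (√C₀ * R), fun x hx => ?_⟩
  have hx0 : 0 < ‖x‖ := hR.trans_le hx
  have : Nontrivial (EuclideanSpace ℝ (Fin n)) := nontrivial_of_ne x 0 (norm_pos_iff.1 hx0)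
  have hv : ‖-(√C₀ / ‖x‖) • x‖ = √C₀ := by
    rw [norm_smul, norm_neg, norm_div, norm_norm, norm_of_nonneg hε.le, div_mul_cancel₀ _ hx0.ne']
  have hvx : ⟪-(√C₀ / ‖x‖) • x, x⟫ = -√C₀ * ‖x‖ := by
    rw [real_inner_smul_left, real_inner_self_eq_norm_sq]
    field_simp
  have key := le_mul_exp_inner_of_mul_le_laplacian hg hε (le_max_right M 0)
    (fun y hy => (hM ⟨y, mem_sphere_zero_iff_norm.2 hy, rfl⟩).trans (le_max_left M 0)) hpoly hΔ
    hv hx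
  rwa [hvx] at key

/-- Ahlfors type lemma: a nonnegative function of polynomial growth on
`{x : |x| ≥ R}` satisfying `Δ g ≤ -C₀ g` (with `Δ = -∑ ∂²`) decays like
`exp (-ε₁ |x|)` for some `ε₁ > 0`. -/
theorem ahlfors_type_decay (n : ℕ) (hn : 1 ≤ n) (R C₀ : ℝ) (hR : 0 < R) (hC₀ : 0 < C₀)
    (g : EuclideanSpace ℝ (Fin n) → ℝ) (hg : ContDiff ℝ 2 g)
    (hgnn : ∀ x, R ≤ ‖x‖ → 0 ≤ g x)
    (hpoly : ∃ (N : ℕ) (C : ℝ), ∀ x, R ≤ ‖x‖ → g x ≤ C * ‖x‖ ^ N)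
    (hsub : ∀ x, R ≤ ‖x‖ →
      -(∑ i, iteratedFDeriv ℝ 2 g x
          ![EuclideanSpace.single i 1, EuclideanSpace.single i 1]) ≤ -C₀ * g x) :
    ∃ ε₁ > (0:ℝ), ∃ C : ℝ, ∀ x, R ≤ ‖x‖ → g x ≤ C * Real.exp (-ε₁ * ‖x‖) :=
  ahlfors_type_decay_general n R C₀ hR hC₀ g hg hpoly hsub
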